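/- arXiv:2301.08666 — 5 statements merged into one kernel-verified Lean document; each statement's English description precedes it below -/
import Mathlib

section
/- If a weak order ≽ on A^N (N finite with at least 2 agents) satisfies symmetry, separability, and sufficientarian judgment, then the induced relation ≥* on A (defined by a ≥* b iff for some c, the allocation with a in coordinate i and c elsewhere is ≽ the allocation with b in coordinate i and c elsewhere) has at most two equivalence classes. -/
open Function

section Defs

variable {N A : Type*}

/-- Weak order: complete and transitive. -/
def WeakOrderRel (R : (N → A) → (N → A) → Prop) : Prop :=
  (∀ x y, R x y ∨ R y x) ∧ ∀ x y z, R x y → R y z → R x z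

/-- The strict part of a relation. -/
def StrictRel (R : (N → A) → (N → A) → Prop) (x y : N → A) : Prop :=
  R x y ∧ ¬ R y x

/-- Symmetry: any allocation is socially indifferent to any permutation of it. -/
def SymmetryAx (R : (N → A) → (N → A) → Prop) : Prop :=
  ∀ (σ : Equiv.Perm N) (x : N → A), R x (x ∘ σ) ∧ R (x ∘ σ) x

open Classical in
/-- `splice M x y` agrees with `x` on `M` and with `y` off `M`. -/
noncomputable def splice (M : Set N) (x y : N → A) : N → A :=
  fun i => if i ∈ M then x i else y i

/-- Separability. -/
def SeparabilityAx (R : (N → A) → (N → A) → Prop) : Prop :=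
  ∀ (M : Set N) (x y x' y' : N → A),
    (R (splice M x y) (splice M x' y) ↔ R (splice M x y') (splice M x' y'))

open Classical in
/-- `alloc i a b` gives `a` to agent `i` and `b` to everyone else. -/
noncomputable def alloc (i : N) (a b : A) : N → A :=
  Function.update (fun _ => b) i a

open Classical in
/-- `alloc2 i j a c b` gives `a` to `i`, `c` to `j`, and `b` to the rest. -/
noncomputable def alloc2 (i j : N) (a c b : A) : N → A :=
  Function.update (alloc i a b) j c

/-- Sufficientarian judgment. -/
def SuffJudgment (R : (N → A) → (N → A) → Prop) : Prop :=
  ∀ (a b c : A) (i j : N), i ≠ j →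
    StrictRel R (fun _ => b) (alloc i a b) →
    R (alloc i a b) (alloc2 i j a c b)

/-- Weak sufficientarian judgment. -/
def WeakSuffJudgment (R : (N → A) → (N → A) → Prop) : Prop :=
  ∀ (a b c : A) (i j : N), i ≠ j →
    StrictRel R (fun _ => b) (alloc i a b) →
    StrictRel R (fun _ => b) (alloc2 i j a c b)

/-- Sufficientarianism: comparisons count agents whose consumption is in a sufficient set. -/
def IsSufficientarian [Fintype N] (R : (N → A) → (N → A) → Prop) : Prop :=
  ∃ S : Set A, ∀ x y : N → A,
    R x y ↔ Nat.card {i : N // x i ∈ S} ≥ Nat.card {i : N // y i ∈ S}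

end Defs

/-- The induced relation on `A`: `a ≥* b` iff giving `a` to some agent `i`
(everyone else consuming `c`) is socially at least as good as giving `b` to `i`. -/
def geStar {N A : Type*} (R : (N → A) → (N → A) → Prop) (a b : A) : Prop :=
  ∃ (i : N) (c : A), R (alloc i a c) (alloc i b c)

/-!
Suppose `a ≻* b ≻* c` and fix agents `i ≠ j`. Then `a_i b ≻ b ≻ c_i b`, so sufficientarian
judgment gives `c_i b ≽ a_j(c_i b)`; by symmetry (swap `i` and `j`) this reads
`c_j b ≽ a_i(c_j b)`, and separability on `{i}` (replace `j`'s `c` by `b`) turns it into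
`b ≽ a_i b`, a contradiction.
-/

section Allocations

variable {N A : Type*}

theorem alloc_self (i : N) (b : A) : alloc i b b = fun _ => b := by
  funext k
  by_cases hk : k = i <;> simp [alloc, hk]

theorem alloc_comp_swap [DecidableEq N] (i j : N) (c b : A) :
    alloc j c b ∘ Equiv.swap i j = alloc i c b := by
  funext k
  rcases eq_or_ne k i with rfl | hki
  · simp [alloc]
  rcases eq_or_ne k j with rfl | hkj
  · simp [alloc, update, hki, hki.symm]
  · simp [alloc, Equiv.swap_apply_of_ne_of_ne hki hkj, hki, hkj]

theorem alloc2_comp_swap [DecidableEq N] {i j : N} (hij : i ≠ j) (a c b : A) :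
    alloc2 i j c a b ∘ Equiv.swap i j = alloc2 i j a c b := by
  funext k
  rcases eq_or_ne k i with rfl | hki
  · simp [alloc2, alloc, hij]
  rcases eq_or_ne k j with rfl | hkj
  · simp [alloc2, alloc, hij]
  · simp [alloc2, alloc, Equiv.swap_apply_of_ne_of_ne hki hkj, hki, hkj]

open Classical in
theorem splice_singleton_const (i : N) (a : A) (y : N → A) :
    splice {i} (fun _ => a) y = update y i a := by
  funext k
  by_cases hk : k = i <;> simp [splice, hk]

theorem splice_singleton_const_const (i : N) (a b : A) :
    splice {i} (fun _ => a) (fun _ => b) = alloc i a b := by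
  classical
  rw [splice_singleton_const, alloc]

theorem splice_singleton_const_alloc {i j : N} (hij : i ≠ j) (a c b : A) :
    splice {i} (fun _ => a) (alloc j c b) = alloc2 i j a c b := by
  classical
  rw [splice_singleton_const, alloc2, alloc, alloc, update_comm hij.symm]

theorem splice_singleton_const_alloc_self {i j : N} (hij : i ≠ j) (c b : A) :
    splice {i} (fun _ => b) (alloc j c b) = alloc j c b := by
  classical
  rw [splice_singleton_const, update_eq_self_iff, alloc, update_of_ne hij]

end Allocations

section Axioms

variable {N A : Type*} {R : (N → A) → (N → A) → Prop}

theorem strictRel_alloc_of_not_geStar (hcomp : ∀ x y, R x y ∨ R y x) {a b : A}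
    (h : ¬ geStar R b a) (i : N) (c : A) : StrictRel R (alloc i a c) (alloc i b c) :=
  ⟨(hcomp _ _).resolve_right fun h' => h ⟨i, c, h'⟩, fun h' => h ⟨i, c, h'⟩⟩

/-- Separability on `{i}`, moving agent `j` from `c` to `b`. -/
theorem SeparabilityAx.rel_alloc_alloc2_iff (hsep : SeparabilityAx R) {i j : N} (hij : i ≠ j)
    (a c b : A) :
    R (alloc j c b) (alloc2 i j a c b) ↔ R (fun _ => b) (alloc i a b) := by
  have h := hsep {i} (fun _ => b) (alloc j c b) (fun _ => a) (fun _ => b)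
  rwa [splice_singleton_const_alloc_self hij, splice_singleton_const_alloc hij,
    splice_singleton_const_const, splice_singleton_const_const, alloc_self] at h

end Axioms

theorem stmt0_general {N A : Type*} [Fintype N] (hN : 2 ≤ Fintype.card N)
    (R : (N → A) → (N → A) → Prop)
    (hwo : WeakOrderRel R) (hsym : SymmetryAx R) (hsep : SeparabilityAx R)
    (hsj : SuffJudgment R) :
    ¬ ∃ a b c : A,
      (geStar R a b ∧ ¬ geStar R b a) ∧ (geStar R b c ∧ ¬ geStar R c b) := by
  classical
  rintro ⟨a, b, c, ⟨-, hba⟩, ⟨-, hcb⟩⟩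
  obtain ⟨hcomp, htrans⟩ := hwo
  obtain ⟨i, j, hij⟩ : ∃ i j : N, i ≠ j := Fintype.exists_pair_of_one_lt_card hN
  have hab : ¬ R (fun _ => b) (alloc i a b) := by
    simpa only [alloc_self] using (strictRel_alloc_of_not_geStar hcomp hba i b).2
  have hbc : StrictRel R (fun _ => b) (alloc i c b) := by
    simpa only [alloc_self] using strictRel_alloc_of_not_geStar hcomp hcb i b
  have hci : R (alloc i c b) (alloc2 i j a c b) := by
    refine htrans _ _ _ (hsj c b a i j hij hbc) ?_
    simpa only [alloc2_comp_swap hij] using (hsym (Equiv.swap i j) (alloc2 i j c a b)).1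
  have hcj : R (alloc j c b) (alloc2 i j a c b) := by
    refine htrans _ _ _ ?_ hci
    simpa only [alloc_comp_swap] using (hsym (Equiv.swap i j) (alloc j c b)).1
  exact hab ((hsep.rel_alloc_alloc2_iff hij a c b).1 hcj)

/-- under weak order, symmetry, separability and sufficientarian judgment,
the induced relation `≥*` has at most two equivalence classes: there is no strictly
decreasing chain of length three. -/
theorem stmt0 {N A : Type*} [Fintype N] (hN : 2 ≤ Fintype.card N) [Nonempty A]
    (R : (N → A) → (N → A) → Prop)
    (hwo : WeakOrderRel R) (hsym : SymmetryAx R) (hsep : SeparabilityAx R)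
    (hsj : SuffJudgment R) :
    ¬ ∃ a b c : A,
      (geStar R a b ∧ ¬ geStar R b a) ∧ (geStar R b c ∧ ¬ geStar R c b) :=
  stmt0_general hN R hwo hsym hsep hsj
end

section
/- A binary relation ≽ on A^N is sufficientarian (i.e., there exists S ⊆ A such that x ≽ y iff |{i : x_i ∈ S}| ≥ |{i : y_i ∈ S}|) if and only if it satisfies weak order, symmetry, separability, and sufficientarian judgment. -/
open Function

/-!
Separability and symmetry make `R` induce one ranking of single bundles, the same for every
agent and every context, and `R` is monotone for it coordinatewise. Sufficientarian judgment
says that a bundle strictly better than some bundle is at least as good as every bundle, so the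
ranking has at most two levels; the sufficient set `S` is the top level when there are two and
empty otherwise. After a permutation of the agents lines up those holding bundles in `S`,
comparing two allocations reduces to comparing how many agents hold bundles in `S`.
-/

section Counting

variable {N A : Type*}

theorem natCard_comp_perm (S : Set A) (x : N → A) (σ : Equiv.Perm N) :
    Nat.card {i // (x ∘ σ) i ∈ S} = Nat.card {i // x i ∈ S} :=
  Nat.card_congr (σ.subtypeEquiv fun _ => Iff.rfl)

theorem natCard_splice [Fintype N] (S : Set A) (M : Set N) (x y : N → A) :
    Nat.card {i // splice M x y i ∈ S} =
      Nat.card {i // i ∈ M ∧ x i ∈ S} + Nat.card {i // i ∉ M ∧ y i ∈ S} := by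
  classical
  rw [← Nat.card_sum]
  refine Nat.card_congr ((Equiv.subtypeEquivRight fun i => ?_).trans (subtypeOrEquiv _ _ ?_))
  · by_cases hi : i ∈ M <;> simp [splice, hi]
  · exact fun r hp hq i hi => (hq i hi).1 (hp i hi).1

open Classical in
theorem natCard_update_add [Fintype N] (S : Set A) (x : N → A) (i : N) (a : A) :
    Nat.card {k // update x i a k ∈ S} + (if x i ∈ S then 1 else 0) =
      Nat.card {k // x k ∈ S} + (if a ∈ S then 1 else 0) := by
  simp only [Nat.card_eq_fintype_card, Fintype.card_subtype, Finset.card_filter]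
  rw [← Finset.add_sum_erase _ _ (Finset.mem_univ i),
    ← Finset.add_sum_erase _ _ (Finset.mem_univ i), update_self,
    Finset.sum_congr rfl fun k hk => by rw [update_of_ne (Finset.ne_of_mem_erase hk)]]
  ring

theorem Equiv.Perm.exists_forall_imp_of_natCard_le [Fintype N] {p q : N → Prop}
    (h : Nat.card {k // q k} ≤ Nat.card {k // p k}) :
    ∃ σ : Equiv.Perm N, ∀ k, q k → p (σ k) := by
  classical
  rw [Nat.card_eq_fintype_card, Nat.card_eq_fintype_card] at h
  obtain ⟨f⟩ := Function.Embedding.nonempty_of_card_le h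
  obtain ⟨σ, hσ⟩ := Equiv.Perm.exists_extending_pair (Subtype.val : {k // q k} → N)
    (fun k => (f k : N)) Subtype.val_injective (Subtype.val_injective.comp f.injective)
  exact ⟨σ, fun k hk => hσ ⟨k, hk⟩ ▸ (f ⟨k, hk⟩).2⟩

end Counting

namespace IsSufficientarian

variable {N A : Type*} [Fintype N] {R : (N → A) → (N → A) → Prop}

theorem weakOrderRel (h : IsSufficientarian R) : WeakOrderRel R := by
  obtain ⟨S, hS⟩ := h
  refine ⟨fun x y => ?_, fun x y z => ?_⟩ <;> simp only [hS] <;> omega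

theorem symmetryAx (h : IsSufficientarian R) : SymmetryAx R := by
  obtain ⟨S, hS⟩ := h
  intro σ x
  simp only [hS, natCard_comp_perm, ge_iff_le, le_refl, and_self]

theorem separabilityAx (h : IsSufficientarian R) : SeparabilityAx R := by
  obtain ⟨S, hS⟩ := h
  intro M x y x' y'
  simp only [hS, natCard_splice]
  omega

theorem suffJudgment (h : IsSufficientarian R) : SuffJudgment R := by
  classical
  obtain ⟨S, hS⟩ := h
  rintro a b c i j hij ⟨hba, hab⟩
  rw [hS] at hba hab ⊢
  -- Strictness forces `b ∈ S`; agent `j` already holds `b`, so giving `j` bundle `c` instead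
  -- cannot raise the count.
  have h_alloc := natCard_update_add S (fun _ => b) i a
  have h_alloc2 := natCard_update_add S (alloc i a b) j c
  rw [show alloc i a b j = b from update_of_ne hij.symm _ _] at h_alloc2
  simp only [alloc2, alloc] at *
  split_ifs at h_alloc h_alloc2 <;> omega

end IsSufficientarian

section Backward

open Classical

variable {N A : Type*} {R : (N → A) → (N → A) → Prop}

theorem WeakOrderRel.refl (hW : WeakOrderRel R) (x : N → A) : R x x :=
  (hW.1 x x).elim id id

theorem WeakOrderRel.trans (hW : WeakOrderRel R) {x y z : N → A} : R x y → R y z → R x z :=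
  hW.2 x y z

theorem SymmetryAx.rel_comp_perm_iff (hSym : SymmetryAx R) (hW : WeakOrderRel R)
    (σ : Equiv.Perm N) (x y : N → A) : R (x ∘ σ) (y ∘ σ) ↔ R x y :=
  ⟨fun h => hW.trans (hSym σ x).1 (hW.trans h (hSym σ y).2),
    fun h => hW.trans (hSym σ x).2 (hW.trans h (hSym σ y).1)⟩

theorem splice_singleton (i : N) (x y : N → A) : splice {i} x y = update y i (x i) := by
  funext k
  by_cases hk : k = i
  · subst hk; simp [splice]
  · simp [splice, hk]

theorem SeparabilityAx.rel_update_iff (hSep : SeparabilityAx R) (x y : N → A) (i : N) (a b : A) :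
    R (update x i a) (update x i b) ↔ R (update y i a) (update y i b) := by
  simpa only [splice_singleton] using hSep {i} (fun _ => a) x (fun _ => b) y

theorem rel_update_iff_rel_update (hW : WeakOrderRel R) (hSym : SymmetryAx R)
    (hSep : SeparabilityAx R) (x y : N → A) (i j : N) (a b : A) :
    R (update x i a) (update x i b) ↔ R (update y j a) (update y j b) := by
  rw [← hSym.rel_comp_perm_iff hW (Equiv.swap i j), update_comp_equiv, update_comp_equiv,
    Equiv.symm_swap, Equiv.swap_apply_left]
  exact hSep.rel_update_iff _ _ _ _ _

def CoordPref (R : (N → A) → (N → A) → Prop) (a b : A) : Prop :=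
  ∀ (x : N → A) (i : N), R (update x i a) (update x i b)

theorem coordPref_iff (hW : WeakOrderRel R) (hSym : SymmetryAx R) (hSep : SeparabilityAx R)
    (x : N → A) (i : N) {a b : A} : CoordPref R a b ↔ R (update x i a) (update x i b) :=
  ⟨fun h => h x i, fun h y j => (rel_update_iff_rel_update hW hSym hSep x y i j a b).1 h⟩

theorem CoordPref.refl (hW : WeakOrderRel R) (a : A) : CoordPref R a a :=
  fun _ _ => hW.refl _

theorem CoordPref.trans (hW : WeakOrderRel R) {a b c : A} (hab : CoordPref R a b)
    (hbc : CoordPref R b c) : CoordPref R a c :=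
  fun x i => hW.trans (hab x i) (hbc x i)

theorem rel_of_forall_coordPref [Fintype N] (hW : WeakOrderRel R) {x y : N → A}
    (h : ∀ i, CoordPref R (x i) (y i)) : R x y := by
  suffices ∀ T : Finset N, R (T.piecewise x y) y by simpa using this Finset.univ
  intro T
  induction T using Finset.induction_on with
  | empty => simpa using hW.refl y
  | insert i T hi ih =>
    have hyi : update (T.piecewise x y) i (y i) = T.piecewise x y :=
      update_eq_self_iff.mpr (T.piecewise_eq_of_notMem _ _ hi).symm
    have hstep := h i (T.piecewise x y) i
    rw [hyi] at hstep
    rw [Finset.piecewise_insert]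
    exact hW.trans hstep ih

theorem not_rel_of_forall_coordPref [Fintype N] (hW : WeakOrderRel R) (hSym : SymmetryAx R)
    (hSep : SeparabilityAx R) {x y : N → A} (h : ∀ k, CoordPref R (y k) (x k)) {i : N}
    (hi : ¬ CoordPref R (x i) (y i)) : ¬ R x y := by
  intro hxy
  have hyz : R y (update x i (y i)) := rel_of_forall_coordPref hW fun k => by
    by_cases hk : k = i
    · subst hk; simpa using CoordPref.refl hW (y k)
    · simpa [update_of_ne hk] using h k
  apply hi
  rw [coordPref_iff hW hSym hSep x i, update_eq_self]
  exact hW.trans hxy hyz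

theorem SuffJudgment.coordPref_of_not_coordPref [Nontrivial N] (hSJ : SuffJudgment R)
    (hW : WeakOrderRel R) (hSym : SymmetryAx R) (hSep : SeparabilityAx R) {a b : A}
    (hab : ¬ CoordPref R a b) (c : A) : CoordPref R b c := by
  obtain ⟨i, j, hij⟩ := exists_pair_ne N
  have hnot : ¬ R (alloc i a b) (fun _ => b) := by
    rwa [coordPref_iff hW hSym hSep (fun _ => b) i, update_eq_self_iff.mpr rfl] at hab
  have hbj : alloc i a b j = b := update_of_ne hij.symm _ _
  have hj : update (alloc i a b) j b = alloc i a b := update_eq_self_iff.mpr hbj.symm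
  rw [coordPref_iff hW hSym hSep (alloc i a b) j, hj]
  exact hSJ a b c i j hij ⟨(hW.1 _ _).resolve_right hnot, hnot⟩

def sufficientSet (R : (N → A) → (N → A) → Prop) : Set A :=
  {a | ∃ b, ¬ CoordPref R b a}

theorem coordPref_iff_mem_sufficientSet [Nontrivial N] (hW : WeakOrderRel R)
    (hSym : SymmetryAx R) (hSep : SeparabilityAx R) (hSJ : SuffJudgment R) (a b : A) :
    CoordPref R a b ↔ (b ∈ sufficientSet R → a ∈ sufficientSet R) := by
  constructor
  · rintro hab ⟨c, hcb⟩
    exact ⟨c, fun hca => hcb (hca.trans hW hab)⟩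
  · intro h
    by_cases ha : a ∈ sufficientSet R
    · obtain ⟨c, hca⟩ := ha
      exact hSJ.coordPref_of_not_coordPref hW hSym hSep hca b
    · have hb : b ∉ sufficientSet R := mt h ha
      exact not_not.mp (not_exists.mp hb a)

theorem rel_iff_natCard_le [Fintype N] (hW : WeakOrderRel R) (hSym : SymmetryAx R)
    (hSep : SeparabilityAx R) {S : Set A} (hS : ∀ a b, CoordPref R a b ↔ (b ∈ S → a ∈ S))
    (x y : N → A) : R x y ↔ Nat.card {i // y i ∈ S} ≤ Nat.card {i // x i ∈ S} := by
  constructor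
  · intro hxy
    by_contra! hlt
    obtain ⟨σ, hσ⟩ := Equiv.Perm.exists_forall_imp_of_natCard_le hlt.le
    obtain ⟨i, hyi, hxi⟩ : ∃ i, y (σ i) ∈ S ∧ x i ∉ S := by
      by_contra! hsub
      exact hlt.not_ge ((natCard_comp_perm S y σ).symm.trans_le
        (Finite.card_le_of_embedding (Subtype.impEmbedding _ _ hsub)))
    -- `y ∘ σ` is agentwise at least as good as `x`, and strictly better at agent `i`.
    exact not_rel_of_forall_coordPref hW hSym hSep (y := y ∘ σ) (fun k => (hS _ _).2 (hσ k))
      (i := i) (fun h => hxi ((hS _ _).1 h hyi)) (hW.trans hxy (hSym σ y).1)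
  · intro hle
    obtain ⟨σ, hσ⟩ := Equiv.Perm.exists_forall_imp_of_natCard_le hle
    exact hW.trans (hSym σ x).1 (rel_of_forall_coordPref hW fun k => (hS _ _).2 (hσ k))

theorem isSufficientarian_of_axioms [Fintype N] [Nontrivial N] (hW : WeakOrderRel R)
    (hSym : SymmetryAx R) (hSep : SeparabilityAx R) (hSJ : SuffJudgment R) :
    IsSufficientarian R :=
  ⟨sufficientSet R, rel_iff_natCard_le hW hSym hSep
    (coordPref_iff_mem_sufficientSet hW hSym hSep hSJ)⟩

end Backward

theorem stmt1_general {N A : Type*} [Fintype N] (hN : 2 ≤ Fintype.card N)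
    (R : (N → A) → (N → A) → Prop) :
    IsSufficientarian R ↔
      (WeakOrderRel R ∧ SymmetryAx R ∧ SeparabilityAx R ∧ SuffJudgment R) := by
  have : Nontrivial N := Fintype.one_lt_card_iff_nontrivial.mp hN
  exact ⟨fun h => ⟨h.weakOrderRel, h.symmetryAx, h.separabilityAx, h.suffJudgment⟩,
    fun ⟨hW, hSym, hSep, hSJ⟩ => isSufficientarian_of_axioms hW hSym hSep hSJ⟩

/-- a binary relation on `A^N` is sufficientarian iff it satisfies
weak order, symmetry, separability, and sufficientarian judgment. -/
theorem stmt1 {N A : Type*} [Fintype N] (hN : 2 ≤ Fintype.card N) [Nonempty A]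
    (R : (N → A) → (N → A) → Prop) :
    IsSufficientarian R ↔
      (WeakOrderRel R ∧ SymmetryAx R ∧ SeparabilityAx R ∧ SuffJudgment R) :=
  stmt1_general hN R
end

section
/- Let ≽ be a sufficientarian binary relation on A^N with sufficient set S, where (A, ≥) is a meet-semilattice. If ≽ additionally satisfies monotonicity and ≥-complements, then S is a filter: S is upward closed and closed under binary meets. -/
open Function

/-- ≥-Complements: if lowering agent `i`'s consumption from `a` to `a ⊓ b` strictly
hurts society, then replacing `a` by `b` also strictly hurts society. -/
def ComplementsAx {N A : Type*} [SemilatticeInf A] (R : (N → A) → (N → A) → Prop) : Prop :=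
  ∀ (i : N) (a b c : A),
    StrictRel R (alloc i a c) (alloc i (a ⊓ b) c) → StrictRel R (alloc i a c) (alloc i b c)

/-! Under the counting representation, `R` compares the numbers of agents whose consumption
lies in `S`. If `a ∈ S` and `a ≤ b`, monotonicity makes the constant allocation `b` at least as
good as the constant allocation `a`, in which every agent is in `S`; so `b ∈ S`. If `a, b ∈ S`
but `a ⊓ b ∉ S`, then lowering agent `i` from `a` to `a ⊓ b` while everyone else holds `a ⊓ b`
is a strict loss, so by ≥-complements replacing `a` by `b` is one too; yet `a` and `b` are both
in `S`, so that replacement does not change the count. -/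

namespace Sufficientarian

variable {N A : Type*} {R : (N → A) → (N → A) → Prop} {S : Set A}

theorem alloc_apply_self (i : N) (a c : A) : alloc i a c i = a := by
  simp [alloc]

theorem alloc_apply_of_ne {i j : N} (hji : j ≠ i) (a c : A) : alloc i a c j = c := by
  simp [alloc, hji]

theorem alloc_self_eq_const (i : N) (c : A) : alloc i c c = fun _ => c := by
  simp [alloc]

theorem alloc_mem_iff_of_mem_iff {a b : A} (hab : a ∈ S ↔ b ∈ S) (i : N) (c : A) (j : N) :
    alloc i a c j ∈ S ↔ alloc i b c j ∈ S := by
  rcases eq_or_ne j i with rfl | hji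
  · simpa only [alloc_apply_self] using hab
  · simp only [alloc_apply_of_ne hji]

theorem natCard_pos_of_mem [Finite N] {x : N → A} {i : N} (hi : x i ∈ S) :
    0 < Nat.card {j // x j ∈ S} :=
  have : Nonempty {j // x j ∈ S} := ⟨⟨i, hi⟩⟩
  Nat.card_pos

theorem natCard_eq_zero_of_forall_notMem {x : N → A} (h : ∀ j, x j ∉ S) :
    Nat.card {j // x j ∈ S} = 0 :=
  have : IsEmpty {j // x j ∈ S} := ⟨fun j => h j.1 j.2⟩
  Nat.card_of_isEmpty

section Representation

variable (hrep : ∀ x y : N → A, R x y ↔ Nat.card {i // x i ∈ S} ≥ Nat.card {i // y i ∈ S})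
include hrep

theorem strictRel_iff_natCard_lt {x y : N → A} :
    StrictRel R x y ↔ Nat.card {i // y i ∈ S} < Nat.card {i // x i ∈ S} := by
  rw [StrictRel, hrep, hrep]
  omega

theorem mem_of_le [Finite N] [Nonempty N] [Preorder A]
    (hmono : ∀ x y : N → A, (∀ i, y i ≤ x i) → R x y) {a b : A} (ha : a ∈ S) (hab : a ≤ b) :
    b ∈ S := by
  by_contra hb
  have hcount := (hrep _ _).1 (hmono (fun _ => b) (fun _ => a) fun _ => hab)
  rw [natCard_eq_zero_of_forall_notMem fun _ => hb] at hcount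
  exact (natCard_pos_of_mem (i := Classical.arbitrary N) ha).ne' (Nat.le_zero.1 hcount)

theorem inf_mem [Finite N] [SemilatticeInf A] (hcomp : ComplementsAx R) (i : N) {a b : A}
    (ha : a ∈ S) (hb : b ∈ S) : a ⊓ b ∈ S := by
  by_contra hab
  have hdrop : StrictRel R (alloc i a (a ⊓ b)) (alloc i (a ⊓ b) (a ⊓ b)) := by
    rw [strictRel_iff_natCard_lt hrep, alloc_self_eq_const,
      natCard_eq_zero_of_forall_notMem fun _ => hab]
    exact natCard_pos_of_mem (i := i) (by rwa [alloc_apply_self])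
  have hswap := (strictRel_iff_natCard_lt hrep).1 (hcomp i a b (a ⊓ b) hdrop)
  rw [Nat.card_congr (Equiv.subtypeEquivRight
    (alloc_mem_iff_of_mem_iff (iff_of_true hb ha) i (a ⊓ b)))] at hswap
  exact lt_irrefl _ hswap

end Representation

end Sufficientarian

/-- a sufficientarian relation with sufficient set `S` on a meet-semilattice
satisfying monotonicity and ≥-complements has a sufficient set that is a filter. -/
theorem stmt4 {N A : Type*} [Fintype N] (hN : 2 ≤ Fintype.card N) [SemilatticeInf A]
    (R : (N → A) → (N → A) → Prop) (S : Set A)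
    (hrep : ∀ x y : N → A,
      R x y ↔ Nat.card {i : N // x i ∈ S} ≥ Nat.card {i : N // y i ∈ S})
    (hmono : ∀ x y : N → A, (∀ i, y i ≤ x i) → R x y)
    (hcomp : ComplementsAx R) :
    (∀ x ∈ S, ∀ y : A, x ≤ y → y ∈ S) ∧ (∀ x ∈ S, ∀ y ∈ S, x ⊓ y ∈ S) := by
  have : Nonempty N := Fintype.card_pos_iff.mp (by omega)
  exact ⟨fun _ hx _ hxy => Sufficientarian.mem_of_le hrep hmono hx hxy,
    fun _ hx _ hy => Sufficientarian.inf_mem hrep hcomp (Classical.arbitrary N) hx hy⟩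
end

section
/- Let ≽ on A² satisfy weak order, symmetry, separability, and weak sufficientarian judgment, and define a ≥* b iff (a,c) ≽ (b,c) for some c. Then for x, y ∈ A² with x₁ ≥* x₂, y₁ ≥* y₂, x₂ >* y₂, and y₁ >* x₁, we have x ≻ y. -/
/-!
Since `x₁ ≥* x₂`, separability gives `x ≽ (x₂, x₂)`. Since `y₂ ≱* x₂`, completeness gives
`(x₂, x₂) ≻ (y₂, x₂)`, and weak sufficientarian judgment upgrades this to `(x₂, x₂) ≻ (y₂, y₁)`,
which is indifferent to `y` by symmetry. Chaining, `x ≻ y`.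
-/

section Pairs

variable {A : Type*}

/-- Weak order on pairs: complete and transitive. -/
def WO2 (R : A × A → A × A → Prop) : Prop :=
  (∀ x y, R x y ∨ R y x) ∧ ∀ x y z, R x y → R y z → R x z

/-- Symmetry for two agents. -/
def SymmTwo (R : A × A → A × A → Prop) : Prop :=
  ∀ a b : A, R (a, b) (b, a)

/-- Separability for two agents: the comparison in one coordinate does not depend
on the common value of the other coordinate. -/
def Sep2 (R : A × A → A × A → Prop) : Prop :=
  (∀ a b c c' : A, R (a, c) (b, c) ↔ R (a, c') (b, c')) ∧
  (∀ a b c c' : A, R (c, a) (c, b) ↔ R (c', a) (c', b))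

/-- Strict part. -/
def Str2 (R : A × A → A × A → Prop) (x y : A × A) : Prop := R x y ∧ ¬ R y x

/-- Weak sufficientarian judgment for two agents (both coordinate versions). -/
def WSJ2 (R : A × A → A × A → Prop) : Prop :=
  (∀ a b c : A, Str2 R (b, b) (a, b) → Str2 R (b, b) (a, c)) ∧
  (∀ a b c : A, Str2 R (b, b) (b, a) → Str2 R (b, b) (c, a))

/-- The induced relation on `A`. -/
def GeS (R : A × A → A × A → Prop) (a b : A) : Prop := ∃ c : A, R (a, c) (b, c)

end Pairs

section Pairs

variable {A : Type*} {R : A × A → A × A → Prop}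

theorem str2_of_R_of_str2 (hwo : WO2 R) {x y z : A × A} (hxy : R x y) (hyz : Str2 R y z) :
    Str2 R x z :=
  ⟨hwo.2 _ _ _ hxy hyz.1, fun hzx => hyz.2 (hwo.2 _ _ _ hzx hxy)⟩

theorem str2_of_str2_of_R (hwo : WO2 R) {x y z : A × A} (hxy : Str2 R x y) (hyz : R y z) :
    Str2 R x z :=
  ⟨hwo.2 _ _ _ hxy.1 hyz, fun hzx => hxy.2 (hwo.2 _ _ _ hyz hzx)⟩

theorem R_diag_of_geS (hsep : Sep2 R) {a b : A} (hab : GeS R a b) : R (a, b) (b, b) :=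
  let ⟨c, hc⟩ := hab
  (hsep.1 a b c b).mp hc

theorem str2_diag_of_not_geS (hwo : WO2 R) (hwsj : WSJ2 R) {a b : A} (hba : ¬ GeS R b a)
    (c : A) : Str2 R (a, a) (b, c) := by
  have hnot : ¬ R (b, a) (a, a) := fun h => hba ⟨a, h⟩
  exact hwsj.1 b a c ⟨(hwo.1 _ _).resolve_left hnot, hnot⟩

end Pairs

theorem stmt14_general {A : Type*} (R : A × A → A × A → Prop)
    (hwo : WO2 R) (hsym : SymmTwo R) (hsep : Sep2 R) (hwsj : WSJ2 R)
    (x y : A × A)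
    (hx : GeS R x.1 x.2)
    (h2 : GeS R x.2 y.2 ∧ ¬ GeS R y.2 x.2) :
    Str2 R x y := by
  have hx_diag : R x (x.2, x.2) := R_diag_of_geS hsep hx
  have hdiag_y : Str2 R (x.2, x.2) (y.2, y.1) := str2_diag_of_not_geS hwo hwsj h2.2 y.1
  exact str2_of_R_of_str2 hwo hx_diag (str2_of_str2_of_R hwo hdiag_y (hsym y.2 y.1))

/-- under weak order, symmetry, separability and weak sufficientarian
judgment on `A²`, if `x₁ ≥* x₂`, `y₁ ≥* y₂`, `x₂ >* y₂`, and `y₁ >* x₁`,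
then `x ≻ y`. -/
theorem stmt14 {A : Type*} [Nonempty A] (R : A × A → A × A → Prop)
    (hwo : WO2 R) (hsym : SymmTwo R) (hsep : Sep2 R) (hwsj : WSJ2 R)
    (x y : A × A)
    (hx : GeS R x.1 x.2) (hy : GeS R y.1 y.2)
    (h2 : GeS R x.2 y.2 ∧ ¬ GeS R y.2 x.2)
    (h1 : GeS R y.1 x.1 ∧ ¬ GeS R x.1 y.1) :
    Str2 R x y :=
  stmt14_general R hwo hsym hsep hwsj x y hx h2
end

section
/- Let N = {1,2,3} and A = {a,b,c}. The weak order ≻ on A^N generated (via symmetry and transitivity) by (c,c,c) ≻ (b,c,c) ≻ (b,b,c) ≻ (a,c,c) ≻ (b,b,b) ≻ (a,b,c) ≻ (a,b,b) ≻ (a,a,b) ≻ (a,a,a) satisfies weak order, symmetry, separability, and weak sufficientarian judgment, but is not an endogenous leximin relation. -/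
/-!
The example is the utilitarian rule with utilities `a ↦ 0`, `b ↦ 5`, `c ↦ 8`. Weak order,
symmetry and separability hold for every additive rule, and weak sufficientarian judgment reduces
to `u a < u b → u a + u c < 2 u b`, which these utilities satisfy. An endogenous leximin order
agreeing with it would have to rank `c >* b` (since `ccb ≺ ccc`) and `b >* a` (since `bba ≺ bbb`);
it would then put `bbb` above `acc`, although their utilities are `15 < 16`.
-/

open Function

section Leximin

variable {A : Type*} {n : ℕ}

/-- A weak order on `A`. -/
def WeakOrderOn (ge : A → A → Prop) : Prop :=
  (∀ a b, ge a b ∨ ge b a) ∧ ∀ a b c, ge a b → ge b c → ge a c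

/-- Symmetric part of `ge`. -/
def EqvStar (ge : A → A → Prop) (a b : A) : Prop := ge a b ∧ ge b a

/-- Strict part of `ge`. -/
def StrictStar (ge : A → A → Prop) (a b : A) : Prop := ge a b ∧ ¬ ge b a

/-- `x` is arranged nondecreasingly with respect to `ge`. -/
def SortedGe (ge : A → A → Prop) (x : Fin n → A) : Prop :=
  ∀ i j : Fin n, i ≤ j → ge (x j) (x i)

/-- Endogenous leximin with underlying weak order `ge`: nondecreasingly arranged
allocations are compared lexicographically from the bottom coordinate, and the
relation is invariant under permutations. -/
def EndoLeximin (R : (Fin n → A) → (Fin n → A) → Prop) (ge : A → A → Prop) : Prop :=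
  WeakOrderOn ge ∧
  (∀ x y : Fin n → A, SortedGe ge x → SortedGe ge y →
    (R x y ↔ ((∀ i, EqvStar ge (x i) (y i)) ∨
      ∃ i : Fin n, (∀ j : Fin n, j < i → EqvStar ge (x j) (y j)) ∧
        StrictStar ge (x i) (y i)))) ∧
  (∀ (σ : Equiv.Perm (Fin n)) (x : Fin n → A), R x (x ∘ σ) ∧ R (x ∘ σ) x)

end Leximin

/-- The utility levels realizing the example's ranking: with `a = 0`, `b = 1`, `c = 2`,
the additive rule with utilities `0, 5, 8` extends the chain
`ccc ≻ bcc ≻ bbc ≻ acc ≻ bbb ≻ abc ≻ abb ≻ aab ≻ aaa`. -/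
noncomputable def exRank : Fin 3 → ℕ := ![0, 5, 8]

noncomputable def exRel (x y : Fin 3 → Fin 3) : Prop :=
  ∑ i, exRank (x i) ≥ ∑ i, exRank (y i)

section Utilitarian

variable {N A M : Type*} [Fintype N] [AddCommMonoid M]

theorem sum_comp_alloc (u : A → M) (i : N) (a b : A) :
    ∑ k, u (alloc i a b k) = u a + (Fintype.card N - 1) • u b := by
  classical
  rw [alloc, Finset.sum_congr rfl fun k _ => apply_update (fun _ => u) _ i a k,
    Finset.sum_update_of_mem (Finset.mem_univ i), Finset.sum_const, Finset.card_univ_sdiff]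
  simp

theorem sum_comp_alloc2 (u : A → M) {i j : N} (hij : i ≠ j) (a c b : A) :
    ∑ k, u (alloc2 i j a c b k) = u a + u c + (Fintype.card N - 2) • u b := by
  classical
  have hi : i ∈ Finset.univ \ {j} := by simpa using hij
  rw [alloc2, Finset.sum_congr rfl fun k _ => apply_update (fun _ => u) _ j c k,
    Finset.sum_update_of_mem (Finset.mem_univ j), alloc,
    Finset.sum_congr rfl fun k _ => apply_update (fun _ => u) _ i a k,
    Finset.sum_update_of_mem hi, Finset.sum_const, Finset.card_sdiff_of_subset (by simpa using hi),
    Finset.card_univ_sdiff, Finset.card_singleton, Finset.card_singleton, Nat.sub_sub,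
    add_left_comm, add_assoc]

theorem sum_comp_splice (u : A → M) (S : Set N) [DecidablePred (· ∈ S)] (x y : N → A) :
    ∑ i, u (splice S x y i) = ∑ i with i ∈ S, u (x i) + ∑ i with i ∉ S, u (y i) := by
  rw [← Finset.sum_ite]
  refine Finset.sum_congr rfl fun i _ => ?_
  simp only [splice]
  split_ifs <;> rfl

variable [LinearOrder M]

def utilitarianRel (u : A → M) (x y : N → A) : Prop :=
  ∑ i, u (y i) ≤ ∑ i, u (x i)

theorem strictRel_utilitarianRel_iff (u : A → M) (x y : N → A) :
    StrictRel (utilitarianRel u) x y ↔ ∑ i, u (y i) < ∑ i, u (x i) :=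
  lt_iff_le_not_ge.symm

theorem weakOrderRel_utilitarianRel (u : A → M) : WeakOrderRel (utilitarianRel (N := N) u) :=
  ⟨fun _ _ => le_total _ _, fun _ _ _ hxy hyz => hyz.trans hxy⟩

theorem symmetryAx_utilitarianRel (u : A → M) : SymmetryAx (utilitarianRel (N := N) u) := by
  intro σ x
  have h : ∑ i, u ((x ∘ σ) i) = ∑ i, u (x i) := Equiv.sum_comp σ (fun i => u (x i))
  exact ⟨h.le, h.ge⟩

variable [IsOrderedCancelAddMonoid M]

theorem separabilityAx_utilitarianRel (u : A → M) :
    SeparabilityAx (utilitarianRel (N := N) u) := by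
  classical
  intro S x y x' y'
  simp only [utilitarianRel, sum_comp_splice, add_le_add_iff_right]

theorem weakSuffJudgment_utilitarianRel (u : A → M)
    (hu : ∀ a b c, u a < u b → u a + u c < u b + u b) :
    WeakSuffJudgment (utilitarianRel (N := N) u) := by
  intro a b c i j hij hab
  obtain ⟨k, hk⟩ : ∃ k, Fintype.card N = k + 2 :=
    ⟨_, (Nat.sub_add_cancel (Fintype.one_lt_card_iff.2 ⟨i, j, hij⟩)).symm⟩
  rw [strictRel_utilitarianRel_iff, sum_comp_alloc, Finset.sum_const, Finset.card_univ, hk] at hab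
  rw [strictRel_utilitarianRel_iff, sum_comp_alloc2 u hij, Finset.sum_const, Finset.card_univ, hk]
  have hab' : u a < u b := by
    change u a + (k + 1) • u b < (k + 1 + 1) • u b at hab
    rw [succ_nsmul _ (k + 1), add_comm (u a)] at hab
    exact lt_of_add_lt_add_left hab
  rw [Nat.add_sub_cancel, add_nsmul, two_nsmul, add_comm (k • u b)]
  exact add_lt_add_left (hu a b c hab') _

end Utilitarian

section Leximin

variable {A : Type*} {n : ℕ} {ge : A → A → Prop}

theorem WeakOrderOn.refl (h : WeakOrderOn ge) (a : A) : ge a a := (h.1 a a).elim id id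

theorem sortedGe_const (h : WeakOrderOn ge) (a : A) : SortedGe ge (fun _ : Fin n => a) :=
  fun _ _ _ => h.refl a

theorem sortedGe_alloc_zero (h : WeakOrderOn ge) {a b : A} (hba : ge b a) :
    SortedGe ge (alloc (0 : Fin (n + 1)) a b) := by
  intro i j hij
  rcases eq_or_ne i 0 with rfl | hi
  · rcases eq_or_ne j 0 with rfl | hj
    · exact h.refl _
    · simpa [alloc, hj] using hba
  · have hj : j ≠ 0 := fun hj => hi (Fin.le_zero_iff.1 (hj ▸ hij))
    simpa [alloc, hi, hj] using h.refl b

theorem sortedGe_alloc_last (h : WeakOrderOn ge) {a b : A} (hab : ge a b) :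
    SortedGe ge (alloc (Fin.last n) a b) := by
  intro i j hij
  rcases eq_or_ne j (Fin.last n) with rfl | hj
  · rcases eq_or_ne i (Fin.last n) with rfl | hi
    · exact h.refl _
    · simpa [alloc, hi] using hab
  · have hi : i ≠ Fin.last n := fun hi => hj (Fin.last_le_iff.1 (hi ▸ hij))
    simpa [alloc, hi, hj] using h.refl b

variable {R : (Fin (n + 1) → A) → (Fin (n + 1) → A) → Prop}

theorem EndoLeximin.rel_const_alloc_zero (hR : EndoLeximin R ge) {a b c : A}
    (hba : StrictStar ge b a) (hca : ge c a) : R (fun _ => b) (alloc 0 a c) := by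
  refine (hR.2.1 _ _ (sortedGe_const hR.1 b) (sortedGe_alloc_zero hR.1 hca)).2
    (Or.inr ⟨0, fun j hj => absurd hj (Fin.not_lt_zero j), ?_⟩)
  simpa [alloc] using hba

theorem EndoLeximin.strictStar_of_not_rel (hR : EndoLeximin R ge) {a b : A}
    (h : ¬ R (alloc (Fin.last n) a b) (fun _ => b)) : StrictStar ge b a := by
  by_contra hne
  have hab : ge a b := by
    by_contra hab
    exact hne ⟨(hR.1.1 a b).resolve_left hab, hab⟩
  refine h ((hR.2.1 _ _ (sortedGe_alloc_last hR.1 hab) (sortedGe_const hR.1 b)).2 ?_)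
  by_cases hba : ge b a
  · refine Or.inl fun i => ?_
    rcases eq_or_ne i (Fin.last n) with rfl | hi
    · simpa [alloc, EqvStar] using And.intro hab hba
    · simpa [alloc, hi, EqvStar] using hR.1.refl b
  · refine Or.inr ⟨Fin.last n, fun j hj => ?_, ?_⟩
    · simpa [alloc, hj.ne, EqvStar] using hR.1.refl b
    · simpa [alloc, StrictStar] using And.intro hab hba

end Leximin

theorem exRank_add_lt_add_of_lt :
    ∀ a b c : Fin 3, exRank a < exRank b → exRank a + exRank c < exRank b + exRank b := by
  unfold exRank; decide

/-- the example weak order on `{a,b,c}³` extends the listed strict chain,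
satisfies weak order, symmetry, separability, and weak sufficientarian judgment, but is
not an endogenous leximin relation. -/
theorem stmt15 :
    (StrictRel exRel ![2,2,2] ![1,2,2] ∧ StrictRel exRel ![1,2,2] ![1,1,2] ∧
     StrictRel exRel ![1,1,2] ![0,2,2] ∧ StrictRel exRel ![0,2,2] ![1,1,1] ∧
     StrictRel exRel ![1,1,1] ![0,1,2] ∧ StrictRel exRel ![0,1,2] ![0,1,1] ∧
     StrictRel exRel ![0,1,1] ![0,0,1] ∧ StrictRel exRel ![0,0,1] ![0,0,0]) ∧
    WeakOrderRel exRel ∧ SymmetryAx exRel ∧ SeparabilityAx exRel ∧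
    WeakSuffJudgment exRel ∧
    ¬ ∃ ge : Fin 3 → Fin 3 → Prop, EndoLeximin exRel ge := by
  refine ⟨?_, weakOrderRel_utilitarianRel exRank, symmetryAx_utilitarianRel exRank,
    separabilityAx_utilitarianRel exRank,
    weakSuffJudgment_utilitarianRel exRank exRank_add_lt_add_of_lt, ?_⟩
  · unfold StrictRel exRel exRank; decide
  · rintro ⟨ge, hR : EndoLeximin exRel ge⟩
    have hcb : StrictStar ge 2 1 := hR.strictStar_of_not_rel (a := 1) (b := 2) (by
      simp [exRel, sum_comp_alloc, exRank])
    have hba : StrictStar ge 1 0 := hR.strictStar_of_not_rel (a := 0) (b := 1) (by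
      simp [exRel, sum_comp_alloc, exRank])
    have hbbb := hR.rel_const_alloc_zero hba (hR.1.2 _ _ _ hcb.1 hba.1)
    simp [exRel, sum_comp_alloc, exRank] at hbbb
end
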